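/- For every 2D grid function ω in W_h one has (4/9)·‖ω‖ ≤ ‖ℋω‖ ≤ ‖ω‖. -/

import Mathlib

open Finset

noncomputable section

/-- spatial mesh size `1/(2J)` -/
def msh (J : ℕ) : ℝ := 1 / (2 * (J : ℝ))

/-- 2D discrete inner product -/
def gridIP2 (J₁ J₂ : ℕ) (ω ν : ℕ → ℕ → ℝ) : ℝ :=
  msh J₁ * msh J₂ *
    ∑ i ∈ Finset.Icc 1 (2 * J₁ - 1), ∑ j ∈ Finset.Icc 1 (2 * J₂ - 1), ω i j * ν i j

/-- 2D discrete `L²` norm -/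
def gridNorm2 (J₁ J₂ : ℕ) (ω : ℕ → ℕ → ℝ) : ℝ :=
  Real.sqrt (gridIP2 J₁ J₂ ω ω)

/-- the 2D norm `‖ω‖_E` -/
def gridNormE (J₁ J₂ : ℕ) (ω : ℕ → ℕ → ℝ) : ℝ :=
  2 / 3 * Real.sqrt (msh J₁ * msh J₂ *
    ∑ i ∈ Finset.Icc 1 J₁, ∑ j ∈ Finset.Icc 1 J₂,
      (ω (2 * i - 2) (2 * j - 1) ^ 2 + ω (2 * i - 1) (2 * j - 2) ^ 2
        + 3 * ω (2 * i - 1) (2 * j - 1) ^ 2))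

/-- the 2D norm `‖ω‖_F = √((4/9)‖ω‖² + ‖ω‖_E²)` -/
def gridNormF (J₁ J₂ : ℕ) (ω : ℕ → ℕ → ℝ) : ℝ :=
  Real.sqrt (4 / 9 * gridNorm2 J₁ J₂ ω ^ 2 + gridNormE J₁ J₂ ω ^ 2)

/-- compact operator `𝒜` in the `x`-direction (interior formula) -/
def cA2 (ω : ℕ → ℕ → ℝ) (i j : ℕ) : ℝ := (ω (i + 1) j + 10 * ω i j + ω (i - 1) j) / 12

/-- compact operator `ℬ` in the `y`-direction (interior formula) -/
def cB2 (ω : ℕ → ℕ → ℝ) (i j : ℕ) : ℝ := (ω i (j + 1) + 10 * ω i j + ω i (j - 1)) / 12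

/-- compact operator `ℋ = 𝒜ℬ` -/
def cH (ω : ℕ → ℕ → ℝ) : ℕ → ℕ → ℝ := cA2 (cB2 ω)

/-- second difference `δ_xδ_x̄` -/
def dxx2 (J₁ : ℕ) (ω : ℕ → ℕ → ℝ) (i j : ℕ) : ℝ :=
  (ω (i + 1) j - 2 * ω i j + ω (i - 1) j) / msh J₁ ^ 2

/-- second difference `δ_yδ_ȳ` -/
def dyy2 (J₂ : ℕ) (ω : ℕ → ℕ → ℝ) (i j : ℕ) : ℝ :=
  (ω i (j + 1) - 2 * ω i j + ω i (j - 1)) / msh J₂ ^ 2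

/-- compact discrete Laplacian `Φ = ℬδ_xδ_x̄ + 𝒜δ_yδ_ȳ` -/
def cPhi (J₁ J₂ : ℕ) (ω : ℕ → ℕ → ℝ) (i j : ℕ) : ℝ :=
  cB2 (dxx2 J₁ ω) i j + cA2 (dyy2 J₂ ω) i j

/-- membership in `W_h`: vanishing on the boundary indices -/
def memWh (J₁ J₂ : ℕ) (ω : ℕ → ℕ → ℝ) : Prop :=
  ∀ i j : ℕ, (i = 0 ∨ i = 2 * J₁ ∨ j = 0 ∨ j = 2 * J₂) → ω i j = 0

/-!
In one dimension `𝒜 = (2/3)·I + (1/12)·T`, where `(T a)ᵢ = aᵢ₊₁ + 2aᵢ + aᵢ₋₁` is positive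
semidefinite on functions vanishing at both ends (summation by parts gives
`⟨a, T a⟩ = a₁² + Σ (aᵢ + aᵢ₊₁)²`); expanding `‖𝒜a‖²` then gives `‖𝒜a‖² ≥ (4/9)‖a‖²`.
On the other side `𝒜a` is pointwise a convex combination of `aᵢ₋₁, aᵢ, aᵢ₊₁`, so `‖𝒜a‖ ≤ ‖a‖`.
Both bounds hold row by row for `𝒜` and column by column for `ℬ`, and `ℋ = 𝒜ℬ` multiplies them.
-/

def compactAvg (a : ℕ → ℝ) (i : ℕ) : ℝ := (a (i + 1) + 10 * a i + a (i - 1)) / 12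

section OneDim

variable {a : ℕ → ℝ} {n : ℕ}

lemma sum_Icc_sq_succ_le (hn : 1 ≤ n) (hb : a (n + 1) = 0) :
    ∑ i ∈ Icc 1 n, a (i + 1) ^ 2 ≤ ∑ i ∈ Icc 1 n, a i ^ 2 := by
  have h := sum_Icc_sub hn (fun i => a i ^ 2)
  rw [sum_sub_distrib, hb] at h
  linarith [sq_nonneg (a 1)]

lemma sum_Icc_sq_pred_le (hn : 1 ≤ n) (h0 : a 0 = 0) :
    ∑ i ∈ Icc 1 n, a (i - 1) ^ 2 ≤ ∑ i ∈ Icc 1 n, a i ^ 2 := by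
  have h := sum_Icc_sub hn (fun i => a (i - 1) ^ 2)
  simp only [Nat.add_sub_cancel, Nat.sub_self, h0] at h
  rw [sum_sub_distrib] at h
  linarith [sq_nonneg (a n)]

lemma sum_mul_add_two_mul_add_nonneg (hn : 1 ≤ n) (h0 : a 0 = 0) (hb : a (n + 1) = 0) :
    0 ≤ ∑ i ∈ Icc 1 n, a i * (a (i + 1) + 2 * a i + a (i - 1)) := by
  -- the last two brackets telescope, to `-a₁²` and `0`
  have hsum : ∑ i ∈ Icc 1 n, a i * (a (i + 1) + 2 * a i + a (i - 1))
      = ∑ i ∈ Icc 1 n, ((a i + a (i + 1)) ^ 2 - (a (i + 1) ^ 2 - a i ^ 2)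
          - (a (i + 1 - 1) * a (i + 1) - a (i - 1) * a i)) := by
    refine sum_congr rfl fun i _ => ?_
    rw [Nat.add_sub_cancel]
    ring
  rw [hsum, sum_sub_distrib, sum_sub_distrib, sum_Icc_sub hn (fun i => a i ^ 2),
    sum_Icc_sub hn (fun i => a (i - 1) * a i)]
  simp only [Nat.add_sub_cancel, Nat.sub_self, h0, hb]
  have hsq : 0 ≤ ∑ i ∈ Icc 1 n, (a i + a (i + 1)) ^ 2 := by positivity
  linarith [sq_nonneg (a 1)]

lemma sum_compactAvg_sq_le (hn : 1 ≤ n) (h0 : a 0 = 0) (hb : a (n + 1) = 0) :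
    ∑ i ∈ Icc 1 n, compactAvg a i ^ 2 ≤ ∑ i ∈ Icc 1 n, a i ^ 2 := by
  have hconvex : ∀ i, compactAvg a i ^ 2 ≤ (a (i + 1) ^ 2 + 10 * a i ^ 2 + a (i - 1) ^ 2) / 12 :=
    fun i => by
      unfold compactAvg
      nlinarith [sq_nonneg (a (i + 1) - a i), sq_nonneg (a (i - 1) - a i),
        sq_nonneg (a (i + 1) - a (i - 1))]
  calc ∑ i ∈ Icc 1 n, compactAvg a i ^ 2
      ≤ ∑ i ∈ Icc 1 n, (a (i + 1) ^ 2 + 10 * a i ^ 2 + a (i - 1) ^ 2) / 12 :=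
        sum_le_sum fun i _ => hconvex i
    _ = (∑ i ∈ Icc 1 n, a (i + 1) ^ 2 + 10 * ∑ i ∈ Icc 1 n, a i ^ 2
          + ∑ i ∈ Icc 1 n, a (i - 1) ^ 2) / 12 := by
        rw [mul_sum, ← sum_add_distrib, ← sum_add_distrib, sum_div]
    _ ≤ ∑ i ∈ Icc 1 n, a i ^ 2 := by
        linarith [sum_Icc_sq_succ_le hn hb, sum_Icc_sq_pred_le hn h0]

lemma four_ninths_mul_sum_sq_le_sum_compactAvg_sq (hn : 1 ≤ n) (h0 : a 0 = 0)
    (hb : a (n + 1) = 0) :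
    4 / 9 * ∑ i ∈ Icc 1 n, a i ^ 2 ≤ ∑ i ∈ Icc 1 n, compactAvg a i ^ 2 := by
  set T : ℕ → ℝ := fun i => a (i + 1) + 2 * a i + a (i - 1)
  have hT : 0 ≤ ∑ i ∈ Icc 1 n, a i * T i := sum_mul_add_two_mul_add_nonneg hn h0 hb
  have hT2 : 0 ≤ ∑ i ∈ Icc 1 n, (T i / 12) ^ 2 := by positivity
  calc 4 / 9 * ∑ i ∈ Icc 1 n, a i ^ 2
      ≤ ∑ i ∈ Icc 1 n, (4 / 9 * a i ^ 2 + 1 / 9 * (a i * T i) + (T i / 12) ^ 2) := by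
        rw [sum_add_distrib, sum_add_distrib, ← mul_sum, ← mul_sum]
        linarith
    _ = ∑ i ∈ Icc 1 n, compactAvg a i ^ 2 :=
        sum_congr rfl fun i _ => by simp only [T, compactAvg]; ring

end OneDim

section TwoDim

variable {J₁ J₂ : ℕ} {ν : ℕ → ℕ → ℝ}

lemma msh_nonneg (J : ℕ) : 0 ≤ msh J := by
  unfold msh
  positivity

lemma gridIP2_cA2_bounds (hJ₁ : 0 < J₁) (h0 : ∀ j, ν 0 j = 0)
    (hb : ∀ j, ν (2 * J₁) j = 0) :
    4 / 9 * gridIP2 J₁ J₂ ν ν ≤ gridIP2 J₁ J₂ (cA2 ν) (cA2 ν) ∧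
      gridIP2 J₁ J₂ (cA2 ν) (cA2 ν) ≤ gridIP2 J₁ J₂ ν ν := by
  have hn : 1 ≤ 2 * J₁ - 1 := by omega
  have hb' : ∀ j, ν (2 * J₁ - 1 + 1) j = 0 := by
    rw [Nat.sub_add_cancel (by omega)]
    exact hb
  have hc := mul_nonneg (msh_nonneg J₁) (msh_nonneg J₂)
  simp only [gridIP2, ← sq]
  rw [sum_comm (f := fun i j => ν i j ^ 2), sum_comm (f := fun i j => cA2 ν i j ^ 2)]
  constructor
  · rw [mul_left_comm, mul_sum]
    refine mul_le_mul_of_nonneg_left (sum_le_sum fun j _ => ?_) hc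
    exact four_ninths_mul_sum_sq_le_sum_compactAvg_sq (a := fun i => ν i j) hn (h0 j) (hb' j)
  · refine mul_le_mul_of_nonneg_left (sum_le_sum fun j _ => ?_) hc
    exact sum_compactAvg_sq_le (a := fun i => ν i j) hn (h0 j) (hb' j)

lemma gridIP2_cB2_bounds (hJ₂ : 0 < J₂) (h0 : ∀ i, ν i 0 = 0)
    (hb : ∀ i, ν i (2 * J₂) = 0) :
    4 / 9 * gridIP2 J₁ J₂ ν ν ≤ gridIP2 J₁ J₂ (cB2 ν) (cB2 ν) ∧
      gridIP2 J₁ J₂ (cB2 ν) (cB2 ν) ≤ gridIP2 J₁ J₂ ν ν := by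
  have hn : 1 ≤ 2 * J₂ - 1 := by omega
  have hb' : ∀ i, ν i (2 * J₂ - 1 + 1) = 0 := by
    rw [Nat.sub_add_cancel (by omega)]
    exact hb
  have hc := mul_nonneg (msh_nonneg J₁) (msh_nonneg J₂)
  simp only [gridIP2, ← sq]
  constructor
  · rw [mul_left_comm, mul_sum]
    refine mul_le_mul_of_nonneg_left (sum_le_sum fun i _ => ?_) hc
    exact four_ninths_mul_sum_sq_le_sum_compactAvg_sq (a := ν i) hn (h0 i) (hb' i)
  · refine mul_le_mul_of_nonneg_left (sum_le_sum fun i _ => ?_) hc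
    exact sum_compactAvg_sq_le (a := ν i) hn (h0 i) (hb' i)

end TwoDim

/-- For every 2D grid function `ω ∈ W_h`, `(4/9)‖ω‖ ≤ ‖ℋω‖ ≤ ‖ω‖`. -/
theorem stmt_13 (J₁ J₂ : ℕ) (hJ₁ : 0 < J₁) (hJ₂ : 0 < J₂)
    (ω : ℕ → ℕ → ℝ) (hω : memWh J₁ J₂ ω) :
    4 / 9 * gridNorm2 J₁ J₂ ω ≤ gridNorm2 J₁ J₂ (cH ω) ∧
      gridNorm2 J₁ J₂ (cH ω) ≤ gridNorm2 J₁ J₂ ω := by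
  obtain ⟨hB_lo, hB_hi⟩ := gridIP2_cB2_bounds (J₁ := J₁) hJ₂
    (fun i => hω i 0 (by simp)) (fun i => hω i _ (by simp))
  obtain ⟨hA_lo, hA_hi⟩ := gridIP2_cA2_bounds (J₂ := J₂) (ν := cB2 ω) hJ₁
    (fun j => by simp [cB2, hω 0 _ (by simp)])
    (fun j => by simp [cB2, hω (2 * J₁) _ (by simp)])
  unfold gridNorm2 cH
  constructor
  · calc 4 / 9 * √(gridIP2 J₁ J₂ ω ω) = √((4 / 9) ^ 2 * gridIP2 J₁ J₂ ω ω) := by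
          rw [Real.sqrt_mul (by positivity), Real.sqrt_sq (by norm_num)]
      _ ≤ √(gridIP2 J₁ J₂ (cA2 (cB2 ω)) (cA2 (cB2 ω))) := by
          refine Real.sqrt_le_sqrt ?_
          rw [sq, mul_assoc]
          linarith
  · exact Real.sqrt_le_sqrt (hA_hi.trans hB_hi)
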